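/- Let A be a synaptic algebra and let e, f ∈ E = {e ∈ A : 0 ≤ e ≤ 1}. Then: (i) if the supremum e ∨ f exists in (E, ≤) (respectively, e ∨ₛ f exists in (E, ≤ₛ)), then (e ∨ f)° = e° ∨ f° (respectively, (e ∨ₛ f)° = e° ∨ f°); (ii) if the infimum e ∧ f exists in (E, ≤) (respectively, e ∧ₛ f exists in (E, ≤ₛ)), then (e ∧ f)° ≤ e° ∧ f° (respectively, (e ∧ₛ f)° ≤ e° ∧ f°), where e° ∨ f° and e° ∧ f° are the join and meet in the orthomodular lattice of projections. -/

import Mathlib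

open Filter Topology

/-- The order-unit norm associated with an order relation `le` on a real algebra:
`‖a‖ = inf {λ > 0 : −λ ≤ a ≤ λ}`. -/
noncomputable def ouNorm {R : Type*} [Ring R] [Algebra ℝ R] (le : R → R → Prop) (a : R) : ℝ :=
  sInf {l : ℝ | 0 < l ∧ le (algebraMap ℝ R (-l)) a ∧ le a (algebraMap ℝ R l)}

/-- A synaptic algebra: a real linear subspace `A` (containing `1`) of a unital associative
algebra `R` over `ℝ` (a complex algebra is in particular a real algebra), equipped with a
partial order making it an Archimedean partially ordered real linear space with order unit `1`,
and satisfying axioms SA1–SA8.  The square root (SA5) and the carrier (SA6) are bundled as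
data together with their defining properties. -/
structure SynapticAlgebra (R : Type*) [Ring R] [Algebra ℝ R] where
  A : Submodule ℝ R
  one_mem : (1 : R) ∈ A
  /-- the synaptic order (meaningful on elements of `A`) -/
  le : R → R → Prop
  -- SA1 : Archimedean partially ordered real linear space with order unit 1
  le_refl : ∀ a ∈ A, le a a
  le_antisymm : ∀ a ∈ A, ∀ b ∈ A, le a b → le b a → a = b
  le_trans : ∀ a ∈ A, ∀ b ∈ A, ∀ c ∈ A, le a b → le b c → le a c
  add_le_add_right : ∀ a ∈ A, ∀ b ∈ A, ∀ c ∈ A, le a b → le (a + c) (b + c)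
  smul_nonneg : ∀ r : ℝ, 0 ≤ r → ∀ a ∈ A, le 0 a → le 0 (r • a)
  arch : ∀ a ∈ A, ∀ b ∈ A, (∀ n : ℕ, le ((n : ℝ) • a) b) → le a 0
  one_order_unit : ∀ a ∈ A, ∃ n : ℕ, le a ((n : ℝ) • (1 : R))
  zero_ne_one : (0 : R) ≠ 1
  -- SA2
  sq_mem : ∀ a ∈ A, a * a ∈ A
  sq_nn : ∀ a ∈ A, le 0 (a * a)
  -- SA3
  quad_mem : ∀ a ∈ A, ∀ b ∈ A, a * b * a ∈ A
  quad_nn : ∀ a ∈ A, ∀ b ∈ A, le 0 a → le 0 b → le 0 (a * b * a)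
  -- SA4
  quad_zero : ∀ a ∈ A, ∀ b ∈ A, le 0 b → a * b * a = 0 → a * b = 0 ∧ b * a = 0
  -- SA5 : square roots
  sqrt : R → R
  sqrt_mem : ∀ a ∈ A, le 0 a → sqrt a ∈ A
  sqrt_nn : ∀ a ∈ A, le 0 a → le 0 (sqrt a)
  sqrt_sq : ∀ a ∈ A, le 0 a → sqrt a * sqrt a = a
  sqrt_bicomm : ∀ a ∈ A, le 0 a → ∀ b ∈ A, a * b = b * a → sqrt a * b = b * sqrt a
  sqrt_unique : ∀ a ∈ A, le 0 a → ∀ b ∈ A, le 0 b → b * b = a →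
    (∀ c ∈ A, a * c = c * a → b * c = c * b) → b = sqrt a
  -- SA6 : carriers
  carr : R → R
  carr_mem : ∀ a ∈ A, carr a ∈ A
  carr_idem : ∀ a ∈ A, carr a * carr a = carr a
  carr_spec : ∀ a ∈ A, ∀ b ∈ A, (a * b = 0 ↔ carr a * b = 0)
  -- SA7
  inv_exists : ∀ a ∈ A, le 1 a → ∃ b ∈ A, a * b = 1 ∧ b * a = 1
  -- SA8
  comm_closed : ∀ a ∈ A, ∀ b ∈ A, ∀ f : ℕ → R, (∀ n, f n ∈ A) →
    (∀ n, le (f n) (f (n + 1))) → (∀ m n, f m * f n = f n * f m) →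
    (∀ n, f n * b = b * f n) →
    Filter.Tendsto (fun n => ouNorm le (a - f n)) Filter.atTop (nhds 0) →
    a * b = b * a

namespace SynapticAlgebra

variable {R : Type*} [Ring R] [Algebra ℝ R] (S : SynapticAlgebra R)

/-- `|a| := (a²)^{1/2}`. -/
def absval (a : R) : R := S.sqrt (a * a)

/-- The positive part `a⁺ := (|a| + a)/2`. -/
noncomputable def pospart (a : R) : R := (2⁻¹ : ℝ) • (S.absval a + a)

/-- The spectral resolution `p_{a,λ} := 1 − ((a − λ)⁺)°`. -/
noncomputable def specProj (a : R) (l : ℝ) : R :=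
  1 - S.carr (S.pospart (a - algebraMap ℝ R l))

/-- The spectral order: `a ≤ₛ b` iff `p_{b,λ} ≤ p_{a,λ}` for all real `λ`. -/
noncomputable def specLE (a b : R) : Prop :=
  ∀ l : ℝ, S.le (S.specProj b l) (S.specProj a l)

/-- Projections of the synaptic algebra. -/
def IsProj (p : R) : Prop := p ∈ S.A ∧ p * p = p

/-- The set `E = {e ∈ A : 0 ≤ e ≤ 1}` of effects. -/
def effects : Set R := {e | e ∈ S.A ∧ S.le 0 e ∧ S.le e 1}

/-- `p` is the infimum of the set `T` in the orthomodular lattice `P` of projections. -/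
def IsProjInf (p : R) (T : Set R) : Prop :=
  S.IsProj p ∧ (∀ q ∈ T, S.le p q) ∧ ∀ r, S.IsProj r → (∀ q ∈ T, S.le r q) → S.le r p

/-- `p` is the supremum of the set `T` in the orthomodular lattice `P` of projections. -/
def IsProjSup (p : R) (T : Set R) : Prop :=
  S.IsProj p ∧ (∀ q ∈ T, S.le q p) ∧ ∀ r, S.IsProj r → (∀ q ∈ T, S.le q r) → S.le p r

/-- A Banach (norm-complete) synaptic algebra: every Cauchy sequence in `A`
(w.r.t. the order-unit norm) converges in norm to an element of `A`. -/
noncomputable def IsBanach : Prop :=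
  ∀ f : ℕ → R, (∀ n, f n ∈ S.A) →
    (∀ ε : ℝ, 0 < ε → ∃ N : ℕ, ∀ m ≥ N, ∀ n ≥ N, ouNorm S.le (f m - f n) < ε) →
    ∃ a ∈ S.A, Filter.Tendsto (fun n => ouNorm S.le (a - f n)) Filter.atTop (nhds 0)

/-- The `λ`-eigenprojection `d_{a,λ} := 1 − (a − λ)°`. -/
noncomputable def eigenProj (a : R) (l : ℝ) : R := 1 - S.carr (a - algebraMap ℝ R l)

/-- The bicommutant `CC(a)` (within `A`). -/
def Bicomm (a : R) : Set R :=
  {b | b ∈ S.A ∧ ∀ c ∈ S.A, a * c = c * a → b * c = c * b}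

/-- Projections `p` and `q` are exchanged by a symmetry (`s² = 1`, `sps = q`). -/
def ExchBySymm (p q : R) : Prop := ∃ s ∈ S.A, s * s = 1 ∧ s * p * s = q

/-- The dimension equivalence on projections: a finite chain of projections, consecutive
ones exchanged by symmetries. -/
def DimEquiv (p q : R) : Prop :=
  ∃ (n : ℕ) (c : ℕ → R), c 0 = p ∧ c n = q ∧ (∀ i ≤ n, S.IsProj (c i)) ∧
    ∀ i < n, S.ExchBySymm (c i) (c (i + 1))

/-- `A` is of finite type iff every projection is finite. -/
def FiniteType : Prop :=
  ∀ p, S.IsProj p → ∀ q, S.IsProj q → S.DimEquiv q p → S.le q p → q = p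

/-- The projection lattice `P` is a complete orthomodular lattice: every set of projections
has an infimum and a supremum in `P`. -/
def ProjComplete : Prop :=
  ∀ T : Set R, (∀ p ∈ T, S.IsProj p) →
    (∃ q, S.IsProjInf q T) ∧ (∃ q, S.IsProjSup q T)

/-- A bounded resolution of identity with bound `K`. -/
def IsBoundedResId (p : ℝ → R) (K : ℝ) : Prop :=
  0 ≤ K ∧ (∀ l, S.IsProj (p l)) ∧
  (∀ l, l < -K → p l = 0) ∧ (∀ l, K ≤ l → p l = 1) ∧
  (∀ l l', l ≤ l' → S.le (p l) (p l')) ∧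
  (∀ l, S.IsProjInf (p l) {x | ∃ l' > l, x = p l'})

end SynapticAlgebra

/-- `c` is a regular involution on the subset `T` of the poset `(T, le')`. -/
def IsRegInvPoset {R : Type*} (le' : R → R → Prop) (T : Set R) (c : R → R) : Prop :=
  (∀ a ∈ T, c a ∈ T) ∧ (∀ a ∈ T, c (c a) = a) ∧
  (∀ a ∈ T, ∀ b ∈ T, le' a b → le' (c b) (c a)) ∧
  (∀ a ∈ T, ∀ b ∈ T, le' a (c a) → le' b (c b) → le' a (c b))

/-- `(T, le', c, 0, 1)` is a Kleene poset: a bounded poset with a regular involution. -/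
def IsKleene {R : Type*} [Zero R] [One R] (le' : R → R → Prop) (T : Set R) (c : R → R) : Prop :=
  IsRegInvPoset le' T c ∧ (0 : R) ∈ T ∧ (1 : R) ∈ T ∧ ∀ a ∈ T, le' 0 a ∧ le' a 1

/-- Every pair of elements of `T` has an infimum and a supremum in `(T, le')`. -/
def HasBinSupInf {R : Type*} (le' : R → R → Prop) (T : Set R) : Prop :=
  ∀ a ∈ T, ∀ b ∈ T,
    (∃ m ∈ T, le' m a ∧ le' m b ∧ ∀ x ∈ T, le' x a → le' x b → le' x m) ∧
    (∃ j ∈ T, le' a j ∧ le' b j ∧ ∀ x ∈ T, le' a x → le' b x → le' j x)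

/-!
Carriers are monotone on effects for both `≤` and `≤ₛ`, and for an effect `x` and a projection
`r`, `x° ≤ r` gives both `x ≤ r` (as `x ≤ x°`) and `x ≤ₛ r`. Since projections are effects with
`r° = r`, these two facts alone make the carrier of a supremum of `e, f` the join of `e°, f°`,
and the carrier of an infimum a lower bound of `e°, f°`. The spectral facts rest on one
computation: if `y q = q y = λ q` for a projection `q`, then `y⁺ q = max(λ, 0) q`. It gives the
spectral resolution of a projection, and `((x - λ)⁺)° ≤ x°` for `x ≥ 0`, `λ ≥ 0`.
-/

theorem mul_one_sub_eq_zero_iff {α : Type*} [Ring α] {a b : α} :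
    a * (1 - b) = 0 ↔ a * b = a := by
  rw [mul_one_sub, sub_eq_zero, eq_comm]

theorem one_sub_mul_eq_zero_iff {α : Type*} [Ring α] {a b : α} :
    (1 - b) * a = 0 ↔ b * a = a := by
  rw [one_sub_mul, sub_eq_zero, eq_comm]

namespace SynapticAlgebra

variable {R : Type*} [Ring R] [Algebra ℝ R] (S : SynapticAlgebra R)

section Order

theorem zero_le_one : S.le 0 1 := by
  simpa using S.sq_nn 1 S.one_mem

theorem sub_nonneg {a b : R} (ha : a ∈ S.A) (hb : b ∈ S.A) : S.le 0 (b - a) ↔ S.le a b := by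
  constructor
  · intro h
    simpa using S.add_le_add_right 0 (zero_mem _) (b - a) (sub_mem hb ha) a ha h
  · intro h
    simpa [← sub_eq_add_neg] using S.add_le_add_right a ha b hb (-a) (neg_mem ha) h

theorem add_nonneg {a b : R} (ha : a ∈ S.A) (hb : b ∈ S.A) (h0a : S.le 0 a) (h0b : S.le 0 b) :
    S.le 0 (a + b) := by
  have h := S.add_le_add_right 0 (zero_mem _) a ha b hb h0a
  rw [zero_add] at h
  exact S.le_trans 0 (zero_mem _) b hb (a + b) (add_mem ha hb) h0b h

theorem one_sub_le_one_sub {a b : R} (ha : a ∈ S.A) (hb : b ∈ S.A) :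
    S.le (1 - b) (1 - a) ↔ S.le a b := by
  rw [← S.sub_nonneg (sub_mem S.one_mem hb) (sub_mem S.one_mem ha), ← S.sub_nonneg ha hb,
    sub_sub_sub_cancel_left]

end Order

section Projections

theorem isProj_nonneg {p : R} (hp : S.IsProj p) : S.le 0 p := by
  simpa [hp.2] using S.sq_nn p hp.1

theorem isProj_one_sub {p : R} (hp : S.IsProj p) : S.IsProj (1 - p) :=
  ⟨sub_mem S.one_mem hp.1, IsIdempotentElem.one_sub hp.2⟩

theorem isProj_mem_effects {p : R} (hp : S.IsProj p) : p ∈ S.effects :=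
  ⟨hp.1, S.isProj_nonneg hp,
    (S.sub_nonneg hp.1 S.one_mem).1 (S.isProj_nonneg (S.isProj_one_sub hp))⟩

theorem isProj_carr {a : R} (ha : a ∈ S.A) : S.IsProj (S.carr a) :=
  ⟨S.carr_mem a ha, S.carr_idem a ha⟩

theorem mul_carr {a : R} (ha : a ∈ S.A) : a * S.carr a = a :=
  mul_one_sub_eq_zero_iff.1 <| (S.carr_spec a ha _ (S.isProj_one_sub (S.isProj_carr ha)).1).2 <|
    IsIdempotentElem.mul_one_sub_self (S.carr_idem a ha)

theorem carr_mul {a : R} (ha : a ∈ S.A) (h0 : S.le 0 a) : S.carr a * a = a := by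
  have hq := (S.isProj_one_sub (S.isProj_carr ha)).1
  have haq : a * (1 - S.carr a) = 0 := mul_one_sub_eq_zero_iff.2 (S.mul_carr ha)
  refine one_sub_mul_eq_zero_iff.1 (S.quad_zero _ hq a ha h0 ?_).1
  rw [mul_assoc, haq, mul_zero]

theorem mul_eq_zero_of_le {x z b : R} (hx : x ∈ S.A) (hz : z ∈ S.A) (hb : b ∈ S.A)
    (h0 : S.le 0 x) (hxz : S.le x z) (hzb : z * b = 0) : x * b = 0 := by
  obtain ⟨q, hq_def⟩ : ∃ q, q = 1 - S.carr z := ⟨_, rfl⟩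
  have hq : S.IsProj q := hq_def ▸ S.isProj_one_sub (S.isProj_carr hz)
  have hzq : z * q = 0 := hq_def ▸ mul_one_sub_eq_zero_iff.2 (S.mul_carr hz)
  have hqxq_mem : q * x * q ∈ S.A := S.quad_mem q hq.1 x hx
  have hqxq_nonneg : S.le 0 (q * x * q) := S.quad_nn q hq.1 x hx (S.isProj_nonneg hq) h0
  have hqxq_nonpos : S.le (q * x * q) 0 := by
    have h := S.quad_nn q hq.1 (z - x) (sub_mem hz hx) (S.isProj_nonneg hq)
      ((S.sub_nonneg hx hz).2 hxz)
    rwa [mul_sub, sub_mul, mul_assoc q z, hzq, mul_zero, S.sub_nonneg hqxq_mem (zero_mem _)] at h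
  have hqxq : q * x * q = 0 :=
    S.le_antisymm _ hqxq_mem 0 (zero_mem _) hqxq_nonpos hqxq_nonneg
  have hxc := (S.quad_zero q hq.1 x hx h0 hqxq).2
  rw [hq_def, mul_one_sub_eq_zero_iff] at hxc
  rw [← hxc, mul_assoc, (S.carr_spec z hz b hb).1 hzb, mul_zero]

theorem isProj_le_iff {p q : R} (hp : S.IsProj p) (hq : S.IsProj q) :
    S.le p q ↔ p * q = p := by
  have hq' := S.isProj_one_sub hq
  constructor
  · intro h
    exact mul_one_sub_eq_zero_iff.1 <| S.mul_eq_zero_of_le hp.1 hq.1 hq'.1 (S.isProj_nonneg hp) h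
      (IsIdempotentElem.mul_one_sub_self hq.2)
  · intro h
    have hqp : q * p = p := by
      refine one_sub_mul_eq_zero_iff.1 (S.quad_zero _ hq'.1 p hp.1 (S.isProj_nonneg hp) ?_).1
      rw [mul_assoc, mul_one_sub_eq_zero_iff.2 h, mul_zero]
    exact (S.sub_nonneg hp.1 hq.1).1
      (S.isProj_nonneg ⟨sub_mem hq.1 hp.1, IsIdempotentElem.sub hp.2 hq.2 h hqp⟩)

theorem carr_le_of_mul_one_sub_eq_zero {a q : R} (ha : a ∈ S.A) (hq : S.IsProj q)
    (h : a * (1 - q) = 0) : S.le (S.carr a) q :=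
  (S.isProj_le_iff (S.isProj_carr ha) hq).2 <|
    mul_one_sub_eq_zero_iff.1 ((S.carr_spec a ha _ (S.isProj_one_sub hq).1).1 h)

theorem carr_of_isProj {p : R} (hp : S.IsProj p) : S.carr p = p :=
  S.le_antisymm _ (S.carr_mem p hp.1) _ hp.1
    (S.carr_le_of_mul_one_sub_eq_zero hp.1 hp (IsIdempotentElem.mul_one_sub_self hp.2))
    ((S.isProj_le_iff hp (S.isProj_carr hp.1)).2 (S.mul_carr hp.1))

theorem carr_smul_le {a : R} (ha : a ∈ S.A) (r : ℝ) : S.le (S.carr (r • a)) (S.carr a) := by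
  refine S.carr_le_of_mul_one_sub_eq_zero (S.A.smul_mem r ha) (S.isProj_carr ha) ?_
  rw [smul_mul_assoc, mul_one_sub_eq_zero_iff.2 (S.mul_carr ha), smul_zero]

theorem carr_smul {a : R} (ha : a ∈ S.A) {r : ℝ} (hr : r ≠ 0) :
    S.carr (r • a) = S.carr a := by
  refine S.le_antisymm _ (S.carr_mem _ (S.A.smul_mem r ha)) _ (S.carr_mem a ha)
    (S.carr_smul_le ha r) ?_
  simpa [smul_smul, inv_mul_cancel₀ hr] using S.carr_smul_le (S.A.smul_mem r ha) r⁻¹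

theorem carr_zero : S.carr (0 : R) = 0 := by
  simpa using (S.carr_spec 0 (zero_mem _) 1 S.one_mem).1 (zero_mul 1)

theorem carr_eq_one_of_one_le {a : R} (ha : a ∈ S.A) (h : S.le 1 a) : S.carr a = 1 := by
  obtain ⟨b, -, -, hba⟩ := S.inv_exists a ha h
  have haq : a * (1 - S.carr a) = 0 := mul_one_sub_eq_zero_iff.2 (S.mul_carr ha)
  have h1 : 1 - S.carr a = 0 :=
    calc 1 - S.carr a = b * a * (1 - S.carr a) := by rw [hba, one_mul]
      _ = 0 := by rw [mul_assoc, haq, mul_zero]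
  exact (sub_eq_zero.1 h1).symm

theorem carr_le_of_le {x z : R} (hx : x ∈ S.A) (hz : z ∈ S.A) (h0 : S.le 0 x)
    (hxz : S.le x z) : S.le (S.carr x) (S.carr z) :=
  S.carr_le_of_mul_one_sub_eq_zero hx (S.isProj_carr hz) <|
    S.mul_eq_zero_of_le hx hz (S.isProj_one_sub (S.isProj_carr hz)).1 h0 hxz
      (mul_one_sub_eq_zero_iff.2 (S.mul_carr hz))

theorem le_carr_of_mem_effects {x : R} (hx : x ∈ S.effects) : S.le x (S.carr x) := by
  obtain ⟨hxA, h0, h1⟩ := hx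
  have hc := S.isProj_carr hxA
  have key : S.carr x * (1 - x) * S.carr x = S.carr x - x := by
    rw [mul_one_sub, sub_mul, hc.2, S.carr_mul hxA h0, S.mul_carr hxA]
  refine (S.sub_nonneg hxA hc.1).1 ?_
  rw [← key]
  exact S.quad_nn _ hc.1 _ (sub_mem S.one_mem hxA) (S.isProj_nonneg hc)
    ((S.sub_nonneg hxA S.one_mem).2 h1)

end Projections

section SquareRoots

theorem eq_zero_of_mul_self_eq_zero {y : R} (hy : y ∈ S.A) (h : y * y = 0) : y = 0 := by
  simpa using (S.quad_zero y hy 1 S.one_mem S.zero_le_one (by rwa [mul_one])).1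

theorem sqrt_mul_self {s : R} (hs : s ∈ S.A) (h0 : S.le 0 s) : S.sqrt (s * s) = s := by
  have hw := S.sq_mem s hs
  have hw0 := S.sq_nn s hs
  set t := S.sqrt (s * s)
  have ht : t ∈ S.A := S.sqrt_mem _ hw hw0
  have ht0 : S.le 0 t := S.sqrt_nn _ hw hw0
  have htt : t * t = s * s := S.sqrt_sq _ hw hw0
  have hts : t * s = s * t := S.sqrt_bicomm _ hw hw0 s hs (mul_assoc s s s)
  have hsum : (s + t) * (s - t) = 0 := by
    rw [mul_sub, add_mul, add_mul, htt, hts]; abel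
  have hs_le : S.le s (s + t) :=
    (S.sub_nonneg hs (add_mem hs ht)).1 (by rwa [add_sub_cancel_left])
  have ht_le : S.le t (s + t) :=
    (S.sub_nonneg ht (add_mem hs ht)).1 (by rwa [add_sub_cancel_right])
  have hs_mul := S.mul_eq_zero_of_le hs (add_mem hs ht) (sub_mem hs ht) h0 hs_le hsum
  have ht_mul := S.mul_eq_zero_of_le ht (add_mem hs ht) (sub_mem hs ht) ht0 ht_le hsum
  have hdiff : (s - t) * (s - t) = 0 := by rw [sub_mul, hs_mul, ht_mul, sub_zero]
  exact (sub_eq_zero.1 (S.eq_zero_of_mul_self_eq_zero (sub_mem hs ht) hdiff)).symm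

theorem pospart_mem {a : R} (ha : a ∈ S.A) : S.pospart a ∈ S.A :=
  S.A.smul_mem _ (add_mem (S.sqrt_mem _ (S.sq_mem a ha) (S.sq_nn a ha)) ha)

theorem pospart_of_nonneg {a : R} (ha : a ∈ S.A) (h0 : S.le 0 a) : S.pospart a = a := by
  rw [pospart, absval, S.sqrt_mul_self ha h0]
  module

theorem pospart_of_nonpos {a : R} (ha : a ∈ S.A) (h0 : S.le a 0) : S.pospart a = 0 := by
  have hna : S.le 0 (-a) := by simpa using (S.sub_nonneg ha (zero_mem _)).2 h0
  rw [pospart, absval, ← neg_mul_neg, S.sqrt_mul_self (neg_mem ha) hna, neg_add_cancel,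
    smul_zero]

/-- `|y|` commutes with `q`, so `|y| q` and `|l| q` are both positive square roots of `l² q`. -/
theorem absval_mul_isProj {y q : R} (hy : y ∈ S.A) (hq : S.IsProj q) {l : ℝ}
    (hyq : y * q = l • q) (hqy : q * y = l • q) : S.absval y * q = |l| • q := by
  have hyy := S.sq_mem y hy
  have hyy0 := S.sq_nn y hy
  have hyyq : y * y * q = (l * l) • q := by
    rw [mul_assoc, hyq, mul_smul_comm, hyq, smul_smul]
  have hqyy : q * (y * y) = (l * l) • q := by
    rw [← mul_assoc, hqy, smul_mul_assoc, hqy, smul_smul]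
  set s := S.absval y
  have hs : s ∈ S.A := S.sqrt_mem _ hyy hyy0
  have hs0 : S.le 0 s := S.sqrt_nn _ hyy hyy0
  have hss : s * s = y * y := S.sqrt_sq _ hyy hyy0
  have hsq : s * q = q * s := S.sqrt_bicomm _ hyy hyy0 q hq.1 (by rw [hyyq, hqyy])
  have hsq_eq : q * s * q = s * q := by rw [mul_assoc, hsq, ← mul_assoc, hq.2]
  have hsq_mem : s * q ∈ S.A := hsq_eq ▸ S.quad_mem q hq.1 s hs
  have hsq0 : S.le 0 (s * q) := hsq_eq ▸ S.quad_nn q hq.1 s hs (S.isProj_nonneg hq) hs0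
  have hlq : |l| • q ∈ S.A := S.A.smul_mem _ hq.1
  have hlq0 : S.le 0 (|l| • q) := S.smul_nonneg _ (abs_nonneg l) q hq.1 (S.isProj_nonneg hq)
  have hsq_sq : (s * q) * (s * q) = (|l| • q) * (|l| • q) :=
    calc (s * q) * (s * q) = s * s * q := by
          rw [mul_assoc, ← mul_assoc q s q, ← hsq, mul_assoc s q q, hq.2, ← mul_assoc]
      _ = (l * l) • q := by rw [hss, hyyq]
      _ = (|l| • q) * (|l| • q) := by rw [smul_mul_smul_comm, hq.2, abs_mul_abs_self]
  rw [← S.sqrt_mul_self hsq_mem hsq0, hsq_sq, S.sqrt_mul_self hlq hlq0]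

theorem pospart_mul_isProj {y q : R} (hy : y ∈ S.A) (hq : S.IsProj q) {l : ℝ}
    (hyq : y * q = l • q) (hqy : q * y = l • q) : S.pospart y * q = max l 0 • q := by
  have hmax : (2⁻¹ : ℝ) * (|l| + l) = max l 0 := by
    rcases le_total 0 l with hl | hl
    · rw [abs_of_nonneg hl, max_eq_left hl]; ring
    · rw [abs_of_nonpos hl, max_eq_right hl]; ring
  rw [pospart, smul_mul_assoc, add_mul, S.absval_mul_isProj hy hq hyq hqy, hyq, ← add_smul,
    smul_smul, hmax]

end SquareRoots

section Spectral

theorem specProj_eq (x : R) (l : ℝ) :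
    S.specProj x l = 1 - S.carr (S.pospart (x - l • 1)) := by
  rw [specProj, Algebra.algebraMap_eq_smul_one]

theorem specProj_zero {x : R} (hx : x ∈ S.A) (h0 : S.le 0 x) :
    S.specProj x 0 = 1 - S.carr x := by
  rw [specProj_eq, zero_smul, sub_zero, S.pospart_of_nonneg hx h0]

theorem specProj_of_neg {x : R} (hx : x ∈ S.A) (h0 : S.le 0 x) {l : ℝ} (hl : l < 0) :
    S.specProj x l = 0 := by
  have hl' : -l ≠ 0 := neg_ne_zero.2 hl.ne
  set a := (-l)⁻¹ • x + 1
  have ha : a ∈ S.A := add_mem (S.A.smul_mem _ hx) S.one_mem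
  have h1a : S.le 1 a := (S.sub_nonneg S.one_mem ha).1 <| by
    simpa [a] using S.smul_nonneg _ (inv_nonneg.2 (neg_nonneg.2 hl.le)) x hx h0
  have ha0 : S.le 0 a := S.le_trans 0 (zero_mem _) 1 S.one_mem a ha S.zero_le_one h1a
  have hxa : x - l • 1 = (-l) • a := by
    rw [smul_add, smul_smul, mul_inv_cancel₀ hl', one_smul, neg_smul, sub_eq_add_neg]
  have hxa0 : S.le 0 ((-l) • a) := S.smul_nonneg _ (by linarith) a ha ha0
  rw [specProj_eq, hxa, S.pospart_of_nonneg (S.A.smul_mem _ ha) hxa0, S.carr_smul ha hl',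
    S.carr_eq_one_of_one_le ha h1a, sub_self]

theorem specProj_of_one_le {x : R} (hx : x ∈ S.A) (h1 : S.le x 1) {l : ℝ} (hl : 1 ≤ l) :
    S.specProj x l = 1 := by
  have hy : x - l • 1 ∈ S.A := sub_mem hx (S.A.smul_mem l S.one_mem)
  have hy0 : S.le (x - l • 1) 0 := by
    rw [← S.sub_nonneg hy (zero_mem _)]
    have h : (0 : R) - (x - l • 1) = (l - 1) • 1 + (1 - x) := by module
    rw [h]
    exact S.add_nonneg (S.A.smul_mem _ S.one_mem) (sub_mem S.one_mem hx)
      (S.smul_nonneg _ (by linarith) 1 S.one_mem S.zero_le_one)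
      ((S.sub_nonneg hx S.one_mem).2 h1)
  rw [specProj_eq, S.pospart_of_nonpos hy hy0, S.carr_zero, sub_zero]

theorem specProj_of_isProj {p : R} (hp : S.IsProj p) {l : ℝ} (h0 : 0 ≤ l) (h1 : l < 1) :
    S.specProj p l = 1 - p := by
  have hy : p - l • 1 ∈ S.A := sub_mem hp.1 (S.A.smul_mem l S.one_mem)
  have hyp : (p - l • 1) * p = (1 - l) • p := by
    rw [sub_mul, hp.2, smul_mul_assoc, one_mul, sub_smul, one_smul]
  have hpy : p * (p - l • 1) = (1 - l) • p := by
    rw [mul_sub, hp.2, mul_smul_comm, mul_one, sub_smul, one_smul]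
  have hyq : (p - l • 1) * (1 - p) = (-l) • (1 - p) := by rw [mul_one_sub, hyp]; module
  have hqy : (1 - p) * (p - l • 1) = (-l) • (1 - p) := by rw [one_sub_mul, hpy]; module
  have hpos : S.pospart (p - l • 1) = (1 - l) • p :=
    calc S.pospart (p - l • 1)
        = S.pospart (p - l • 1) * p + S.pospart (p - l • 1) * (1 - p) := by
          rw [mul_one_sub]; abel
      _ = max (1 - l) 0 • p + max (-l) 0 • (1 - p) := by
          rw [S.pospart_mul_isProj hy hp hyp hpy,
            S.pospart_mul_isProj hy (S.isProj_one_sub hp) hyq hqy]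
      _ = (1 - l) • p := by
          rw [max_eq_left (by linarith), max_eq_right (by linarith), zero_smul, add_zero]
  rw [specProj_eq, hpos, S.carr_smul hp.1 (by linarith), S.carr_of_isProj hp]

theorem carr_pospart_sub_le_carr {x : R} (hx : x ∈ S.A) (h0 : S.le 0 x) {l : ℝ}
    (hl : 0 ≤ l) :
    S.le (S.carr (S.pospart (x - l • 1))) (S.carr x) := by
  have hy : x - l • 1 ∈ S.A := sub_mem hx (S.A.smul_mem l S.one_mem)
  have hxq : x * (1 - S.carr x) = 0 := mul_one_sub_eq_zero_iff.2 (S.mul_carr hx)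
  have hqx : (1 - S.carr x) * x = 0 := one_sub_mul_eq_zero_iff.2 (S.carr_mul hx h0)
  have hyq : (x - l • 1) * (1 - S.carr x) = (-l) • (1 - S.carr x) := by
    rw [sub_mul, hxq, smul_mul_assoc, one_mul, zero_sub, neg_smul]
  have hqy : (1 - S.carr x) * (x - l • 1) = (-l) • (1 - S.carr x) := by
    rw [mul_sub, hqx, mul_smul_comm, mul_one, zero_sub, neg_smul]
  refine S.carr_le_of_mul_one_sub_eq_zero (S.pospart_mem hy) (S.isProj_carr hx) ?_
  rw [S.pospart_mul_isProj hy (S.isProj_one_sub (S.isProj_carr hx)) hyq hqy,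
    max_eq_right (by linarith), zero_smul]

theorem carr_le_of_specLE {x z : R} (hx : x ∈ S.A) (h0x : S.le 0 x) (hz : z ∈ S.A)
    (h0z : S.le 0 z) (h : S.specLE x z) : S.le (S.carr x) (S.carr z) := by
  have h' := h 0
  rwa [S.specProj_zero hz h0z, S.specProj_zero hx h0x,
    S.one_sub_le_one_sub (S.carr_mem x hx) (S.carr_mem z hz)] at h'

theorem specLE_of_carr_le {x r : R} (hx : x ∈ S.effects) (hr : S.IsProj r)
    (h : S.le (S.carr x) r) : S.specLE x r := by
  obtain ⟨hxA, h0, h1⟩ := hx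
  intro l
  rcases lt_or_ge l 0 with hl | hl
  · rw [S.specProj_of_neg hr.1 (S.isProj_nonneg hr) hl, S.specProj_of_neg hxA h0 hl]
    exact S.le_refl 0 (zero_mem _)
  rcases lt_or_ge l 1 with hl1 | hl1
  · have hc := S.carr_mem _ (S.pospart_mem (sub_mem hxA (S.A.smul_mem l S.one_mem)))
    rw [S.specProj_of_isProj hr hl hl1, specProj_eq, S.one_sub_le_one_sub hc hr.1]
    exact S.le_trans _ hc _ (S.carr_mem x hxA) r hr.1 (S.carr_pospart_sub_le_carr hxA h0 hl) h
  · rw [S.specProj_of_one_le hr.1 (S.isProj_mem_effects hr).2.2 hl1,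
      S.specProj_of_one_le hxA h1 hl1]
    exact S.le_refl 1 S.one_mem

end Spectral

theorem isProjSup_carr_of_isLUB (le' : R → R → Prop)
    (carr_mono : ∀ x ∈ S.effects, ∀ y ∈ S.effects, le' x y → S.le (S.carr x) (S.carr y))
    (le_of_carr_le : ∀ x ∈ S.effects, ∀ r, S.IsProj r → S.le (S.carr x) r → le' x r)
    {e f g : R} (he : e ∈ S.effects) (hf : f ∈ S.effects) (hg : g ∈ S.effects)
    (heg : le' e g) (hfg : le' f g) (hlub : ∀ h ∈ S.effects, le' e h → le' f h → le' g h) :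
    S.IsProjSup (S.carr g) {S.carr e, S.carr f} := by
  refine ⟨S.isProj_carr hg.1, ?_, fun r hr hub => ?_⟩
  · rintro q (rfl | rfl)
    exacts [carr_mono e he g hg heg, carr_mono f hf g hg hfg]
  · have hr' := S.isProj_mem_effects hr
    have her := le_of_carr_le e he r hr (hub _ (Set.mem_insert _ _))
    have hfr := le_of_carr_le f hf r hr (hub _ (Set.mem_insert_of_mem _ rfl))
    simpa [S.carr_of_isProj hr] using carr_mono g hg r hr' (hlub r hr' her hfr)

theorem carr_le_of_isProjInf (le' : R → R → Prop)
    (carr_mono : ∀ x ∈ S.effects, ∀ y ∈ S.effects, le' x y → S.le (S.carr x) (S.carr y))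
    {e f g m : R} (he : e ∈ S.effects) (hf : f ∈ S.effects) (hg : g ∈ S.effects)
    (hge : le' g e) (hgf : le' g f) (hm : S.IsProjInf m {S.carr e, S.carr f}) :
    S.le (S.carr g) m := by
  refine hm.2.2 _ (S.isProj_carr hg.1) ?_
  rintro q (rfl | rfl)
  exacts [carr_mono g hg e he hge, carr_mono g hg f hf hgf]

end SynapticAlgebra

/-- For effects `e, f`:
(i) if `e ∨ f` exists in `(E, ≤)` (resp. `e ∨ₛ f` in `(E, ≤ₛ)`), then its carrier is the
join `e° ∨ f°` in `P`;
(ii) if `e ∧ f` exists in `(E, ≤)` (resp. `e ∧ₛ f` in `(E, ≤ₛ)`), then its carrier is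
below the meet `e° ∧ f°` in `P`. -/
theorem carrier_sup_inf {R : Type*} [Ring R] [Algebra ℝ R]
    (S : SynapticAlgebra R) (e f : R) (he : e ∈ S.effects) (hf : f ∈ S.effects) :
    (∀ g ∈ S.effects,
      (S.le e g ∧ S.le f g ∧ ∀ h ∈ S.effects, S.le e h → S.le f h → S.le g h) →
      S.IsProjSup (S.carr g) {S.carr e, S.carr f}) ∧
    (∀ g ∈ S.effects,
      (S.specLE e g ∧ S.specLE f g ∧
        ∀ h ∈ S.effects, S.specLE e h → S.specLE f h → S.specLE g h) →
      S.IsProjSup (S.carr g) {S.carr e, S.carr f}) ∧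
    (∀ g ∈ S.effects,
      (S.le g e ∧ S.le g f ∧ ∀ h ∈ S.effects, S.le h e → S.le h f → S.le h g) →
      ∀ m : R, S.IsProjInf m {S.carr e, S.carr f} → S.le (S.carr g) m) ∧
    (∀ g ∈ S.effects,
      (S.specLE g e ∧ S.specLE g f ∧
        ∀ h ∈ S.effects, S.specLE h e → S.specLE h f → S.specLE h g) →
      ∀ m : R, S.IsProjInf m {S.carr e, S.carr f} → S.specLE (S.carr g) m) := by
  have carr_mono_le :
      ∀ x ∈ S.effects, ∀ y ∈ S.effects, S.le x y → S.le (S.carr x) (S.carr y) :=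
    fun x hx y hy hxy => S.carr_le_of_le hx.1 hy.1 hx.2.1 hxy
  have carr_mono_specLE :
      ∀ x ∈ S.effects, ∀ y ∈ S.effects, S.specLE x y → S.le (S.carr x) (S.carr y) :=
    fun x hx y hy hxy => S.carr_le_of_specLE hx.1 hx.2.1 hy.1 hy.2.1 hxy
  have le_of_carr_le : ∀ x ∈ S.effects, ∀ r, S.IsProj r → S.le (S.carr x) r → S.le x r :=
    fun x hx r hr h =>
      S.le_trans x hx.1 _ (S.carr_mem x hx.1) r hr.1 (S.le_carr_of_mem_effects hx) h
  refine ⟨fun g hg ⟨heg, hfg, hlub⟩ => ?_, fun g hg ⟨heg, hfg, hlub⟩ => ?_,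
    fun g hg ⟨hge, hgf, _⟩ m hm => ?_, fun g hg ⟨hge, hgf, _⟩ m hm => ?_⟩
  · exact S.isProjSup_carr_of_isLUB S.le carr_mono_le le_of_carr_le he hf hg heg hfg hlub
  · exact S.isProjSup_carr_of_isLUB S.specLE carr_mono_specLE
      (fun x hx r hr => S.specLE_of_carr_le hx hr) he hf hg heg hfg hlub
  · exact S.carr_le_of_isProjInf S.le carr_mono_le he hf hg hge hgf hm
  · have hcg := S.isProj_carr hg.1
    refine S.specLE_of_carr_le (S.isProj_mem_effects hcg) hm.1 ?_
    rw [S.carr_of_isProj hcg]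
    exact S.carr_le_of_isProjInf S.specLE carr_mono_specLE he hf hg hge hgf hm
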